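/- Soundness of the variant K6 of the Kuroda translation into minimal logic: if CL + Γ ⊢ A then ML + K6(Γ) ⊢ K6(A), where the inner translation maps atomic P to P, (A → B) to (A^{K6} → ¬¬B^{K6}), commutes with ∧, ∨, ∃, maps ∀x A to ∀x ¬¬A^{K6}, and K6(A) ≡ ¬¬A^{K6}. -/
import Mathlib


/-- First-order formulas over domain `α`, with HOAS quantifiers.
`bot` is an ordinary atom with no special rules in minimal logic. -/
inductive Formula (α : Type) : Type where
  | atom : ℕ → List α → Formula α
  | bot : Formula α
  | and : Formula α → Formula α → Formula α
  | or : Formula α → Formula α → Formula α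
  | imp : Formula α → Formula α → Formula α
  | all : (α → Formula α) → Formula α
  | ex : (α → Formula α) → Formula α

/-- Negation: `¬A ≡ A → ⊥`. -/
def Formula.neg {α : Type} (A : Formula α) : Formula α := A.imp .bot

/-- Biconditional. -/
def Formula.iff {α : Type} (A B : Formula α) : Formula α := (A.imp B).and (B.imp A)

/-- Minimal first-order logic: natural deduction without ex falso quodlibet. -/
inductive ML {α : Type} : Set (Formula α) → Formula α → Prop where
  | ax {Γ : Set (Formula α)} {A : Formula α} : A ∈ Γ → ML Γ A
  | impI {Γ : Set (Formula α)} {A B : Formula α} : ML (insert A Γ) B → ML Γ (A.imp B)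
  | impE {Γ : Set (Formula α)} {A B : Formula α} : ML Γ (A.imp B) → ML Γ A → ML Γ B
  | andI {Γ : Set (Formula α)} {A B : Formula α} : ML Γ A → ML Γ B → ML Γ (A.and B)
  | andE1 {Γ : Set (Formula α)} {A B : Formula α} : ML Γ (A.and B) → ML Γ A
  | andE2 {Γ : Set (Formula α)} {A B : Formula α} : ML Γ (A.and B) → ML Γ B
  | orI1 {Γ : Set (Formula α)} {A B : Formula α} : ML Γ A → ML Γ (A.or B)
  | orI2 {Γ : Set (Formula α)} {A B : Formula α} : ML Γ B → ML Γ (A.or B)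
  | orE {Γ : Set (Formula α)} {A B C : Formula α} : ML Γ (A.or B) → ML (insert A Γ) C → ML (insert B Γ) C → ML Γ C
  | allI {Γ : Set (Formula α)} {f : α → Formula α} : (∀ a, ML Γ (f a)) → ML Γ (.all f)
  | allE {Γ f} (a : α) : ML Γ (.all f) → ML Γ (f a)
  | exI {Γ f} (a : α) : ML Γ (f a) → ML Γ (.ex f)
  | exE {Γ : Set (Formula α)} {f : α → Formula α} {C : Formula α} : ML Γ (.ex f) → (∀ a, ML (insert (f a) Γ) C) → ML Γ C

/-- Intuitionistic first-order logic: minimal logic plus ex falso quodlibet. -/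
inductive IL {α : Type} : Set (Formula α) → Formula α → Prop where
  | ax {Γ : Set (Formula α)} {A : Formula α} : A ∈ Γ → IL Γ A
  | impI {Γ : Set (Formula α)} {A B : Formula α} : IL (insert A Γ) B → IL Γ (A.imp B)
  | impE {Γ : Set (Formula α)} {A B : Formula α} : IL Γ (A.imp B) → IL Γ A → IL Γ B
  | andI {Γ : Set (Formula α)} {A B : Formula α} : IL Γ A → IL Γ B → IL Γ (A.and B)
  | andE1 {Γ : Set (Formula α)} {A B : Formula α} : IL Γ (A.and B) → IL Γ A
  | andE2 {Γ : Set (Formula α)} {A B : Formula α} : IL Γ (A.and B) → IL Γ B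
  | orI1 {Γ : Set (Formula α)} {A B : Formula α} : IL Γ A → IL Γ (A.or B)
  | orI2 {Γ : Set (Formula α)} {A B : Formula α} : IL Γ B → IL Γ (A.or B)
  | orE {Γ : Set (Formula α)} {A B C : Formula α} : IL Γ (A.or B) → IL (insert A Γ) C → IL (insert B Γ) C → IL Γ C
  | allI {Γ : Set (Formula α)} {f : α → Formula α} : (∀ a, IL Γ (f a)) → IL Γ (.all f)
  | allE {Γ f} (a : α) : IL Γ (.all f) → IL Γ (f a)
  | exI {Γ f} (a : α) : IL Γ (f a) → IL Γ (.ex f)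
  | exE {Γ : Set (Formula α)} {f : α → Formula α} {C : Formula α} : IL Γ (.ex f) → (∀ a, IL (insert (f a) Γ) C) → IL Γ C
  | efq {Γ : Set (Formula α)} {A : Formula α} : IL Γ .bot → IL Γ A

/-- Classical first-order logic: minimal logic plus double negation elimination. -/
inductive CL {α : Type} : Set (Formula α) → Formula α → Prop where
  | ax {Γ : Set (Formula α)} {A : Formula α} : A ∈ Γ → CL Γ A
  | impI {Γ : Set (Formula α)} {A B : Formula α} : CL (insert A Γ) B → CL Γ (A.imp B)
  | impE {Γ : Set (Formula α)} {A B : Formula α} : CL Γ (A.imp B) → CL Γ A → CL Γ B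
  | andI {Γ : Set (Formula α)} {A B : Formula α} : CL Γ A → CL Γ B → CL Γ (A.and B)
  | andE1 {Γ : Set (Formula α)} {A B : Formula α} : CL Γ (A.and B) → CL Γ A
  | andE2 {Γ : Set (Formula α)} {A B : Formula α} : CL Γ (A.and B) → CL Γ B
  | orI1 {Γ : Set (Formula α)} {A B : Formula α} : CL Γ A → CL Γ (A.or B)
  | orI2 {Γ : Set (Formula α)} {A B : Formula α} : CL Γ B → CL Γ (A.or B)
  | orE {Γ : Set (Formula α)} {A B C : Formula α} : CL Γ (A.or B) → CL (insert A Γ) C → CL (insert B Γ) C → CL Γ C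
  | allI {Γ : Set (Formula α)} {f : α → Formula α} : (∀ a, CL Γ (f a)) → CL Γ (.all f)
  | allE {Γ f} (a : α) : CL Γ (.all f) → CL Γ (f a)
  | exI {Γ f} (a : α) : CL Γ (f a) → CL Γ (.ex f)
  | exE {Γ : Set (Formula α)} {f : α → Formula α} {C : Formula α} : CL Γ (.ex f) → (∀ a, CL (insert (f a) Γ) C) → CL Γ C
  | dne {Γ : Set (Formula α)} {A : Formula α} : CL Γ A.neg.neg → CL Γ A

/-- Inner translation of K6: `(A → B)` goes to `A^{K6} → ¬¬B^{K6}`, otherwise as Kuroda. -/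
def kurodaSix {α : Type} : Formula α → Formula α
  | .atom n ts => Formula.atom n ts
  | .bot => Formula.bot
  | .and A B => (kurodaSix A).and (kurodaSix B)
  | .or A B => (kurodaSix A).or (kurodaSix B)
  | .imp A B => (kurodaSix A).imp (kurodaSix B).neg.neg
  | .all f => .all (fun a => (kurodaSix (f a)).neg.neg)
  | .ex f => .ex (fun a => kurodaSix (f a))


theorem ML.weaken {α : Type} {Γ Δ : Set (Formula α)} {A : Formula α}
    (h : ML Γ A) (hs : Γ ⊆ Δ) : ML Δ A := by
  induction h generalizing Δ with
  | ax h => exact ML.ax (hs h)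
  | impI _ ih => exact ML.impI (ih (Set.insert_subset_insert hs))
  | impE _ _ ih1 ih2 => exact ML.impE (ih1 hs) (ih2 hs)
  | andI _ _ ih1 ih2 => exact ML.andI (ih1 hs) (ih2 hs)
  | andE1 _ ih => exact ML.andE1 (ih hs)
  | andE2 _ ih => exact ML.andE2 (ih hs)
  | orI1 _ ih => exact ML.orI1 (ih hs)
  | orI2 _ ih => exact ML.orI2 (ih hs)
  | orE _ _ _ ih ih1 ih2 =>
      exact ML.orE (ih hs) (ih1 (Set.insert_subset_insert hs)) (ih2 (Set.insert_subset_insert hs))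
  | allI _ ih => exact ML.allI (fun a => ih a hs)
  | allE a _ ih => exact ML.allE a (ih hs)
  | exI a _ ih => exact ML.exI a (ih hs)
  | exE _ _ ih ihs => exact ML.exE (ih hs) (fun a => ihs a (Set.insert_subset_insert hs))

theorem ML.dni {α : Type} {Γ : Set (Formula α)} {A : Formula α}
    (h : ML Γ A) : ML Γ A.neg.neg :=
  ML.impI (ML.impE (ML.ax (Set.mem_insert _ _)) (h.weaken (Set.subset_insert _ _)))

theorem ML.cut {α : Type} {Γ : Set (Formula α)} {A B : Formula α}
    (h1 : ML Γ A) (h2 : ML (insert A Γ) B) : ML Γ B :=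
  ML.impE (ML.impI h2) h1

theorem ML.dn_bind {α : Type} {Γ : Set (Formula α)} {A C : Formula α}
    (h1 : ML Γ A.neg.neg) (h2 : ML (insert A Γ) C.neg) : ML Γ C.neg :=
  ML.impI (ML.impE (h1.weaken (Set.subset_insert _ _))
    (ML.impI (ML.impE (h2.weaken (Set.insert_subset_insert (Set.subset_insert _ _)))
      (ML.ax (Set.mem_insert_of_mem _ (Set.mem_insert _ _))))))

/-- Soundness of K6: if `CL + Γ ⊢ A` then `ML + K6(Γ) ⊢ K6(A)`. -/
theorem kurodaSix_soundness {α : Type} (Γ : Set (Formula α)) (A : Formula α)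
    (h : CL Γ A) : ML ((fun G => (kurodaSix G).neg.neg) '' Γ) ((kurodaSix A).neg.neg) := by
  induction h with
  | @ax Γ A h => exact ML.ax ⟨A, h, rfl⟩
  | @impI Γ A B _ ih =>
      simp only [Set.image_insert_eq] at ih
      exact ML.dni (ML.impI (ML.cut (ML.dni (ML.ax (Set.mem_insert _ _)))
        (ih.weaken (Set.insert_subset_insert (Set.subset_insert _ _)))))
  | @impE Γ A B _ _ ih1 ih2 =>
      exact ML.dn_bind ih1 (ML.dn_bind (ih2.weaken (Set.subset_insert _ _))
        (ML.impE (ML.ax (Set.mem_insert_of_mem _ (Set.mem_insert _ _)))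
          (ML.ax (Set.mem_insert _ _))))
  | @andI Γ A B _ _ ih1 ih2 =>
      exact ML.dn_bind ih1 (ML.dn_bind (ih2.weaken (Set.subset_insert _ _))
        (ML.dni (ML.andI (ML.ax (Set.mem_insert_of_mem _ (Set.mem_insert _ _)))
          (ML.ax (Set.mem_insert _ _)))))
  | @andE1 Γ A B _ ih =>
      exact ML.dn_bind ih (ML.dni (ML.andE1 (ML.ax (Set.mem_insert _ _))))
  | @andE2 Γ A B _ ih =>
      exact ML.dn_bind ih (ML.dni (ML.andE2 (ML.ax (Set.mem_insert _ _))))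
  | @orI1 Γ A B _ ih =>
      exact ML.dn_bind ih (ML.dni (ML.orI1 (ML.ax (Set.mem_insert _ _))))
  | @orI2 Γ A B _ ih =>
      exact ML.dn_bind ih (ML.dni (ML.orI2 (ML.ax (Set.mem_insert _ _))))
  | @orE Γ A B C _ _ _ ih ih1 ih2 =>
      simp only [Set.image_insert_eq] at ih1 ih2
      refine ML.dn_bind ih (ML.orE (ML.ax (Set.mem_insert _ _)) ?_ ?_)
      · exact ML.cut (ML.dni (ML.ax (Set.mem_insert _ _)))
          (ih1.weaken (Set.insert_subset_insert
            ((Set.subset_insert _ _).trans (Set.subset_insert _ _))))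
      · exact ML.cut (ML.dni (ML.ax (Set.mem_insert _ _)))
          (ih2.weaken (Set.insert_subset_insert
            ((Set.subset_insert _ _).trans (Set.subset_insert _ _))))
  | @allI Γ f _ ih => exact ML.dni (ML.allI (fun a => ih a))
  | @allE Γ f a _ ih =>
      exact ML.dn_bind ih (ML.allE a (ML.ax (Set.mem_insert _ _)))
  | @exI Γ f a _ ih =>
      exact ML.dn_bind ih (ML.dni (ML.exI a (ML.ax (Set.mem_insert _ _))))
  | @exE Γ f C _ _ ih ihs =>
      refine ML.dn_bind ih (ML.exE (ML.ax (Set.mem_insert _ _)) (fun a => ?_))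
      have h2 := ihs a
      simp only [Set.image_insert_eq] at h2
      exact ML.cut (ML.dni (ML.ax (Set.mem_insert _ _)))
        (h2.weaken (Set.insert_subset_insert
          ((Set.subset_insert _ _).trans (Set.subset_insert _ _))))
  | @dne Γ A _ ih =>
      refine ML.impI (ML.impE (ih.weaken (Set.subset_insert _ _)) (ML.impI ?_))
      refine ML.impE (ML.impE (ML.ax (Set.mem_insert _ _)) (ML.impI (ML.dni ?_)))
        (ML.impI (ML.ax (Set.mem_insert _ _)))
      exact ML.impE
        (ML.ax (Set.mem_insert_of_mem _ (Set.mem_insert_of_mem _ (Set.mem_insert _ _))))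
        (ML.ax (Set.mem_insert _ _))
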